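/- arXiv:2509.15647 — 2 statements merged into one kernel-verified Lean document; each statement's English description precedes it below -/
import Mathlib

section
/- Let 𝓑 be a Banach space, (P_n)_{n≥0} a sequence of bounded linear operators on 𝓑 and (g_n)_{n≥0} a sequence of elements of 𝓑. Assume: (1) √n·P_n converges in operator norm to a bounded operator P as n → ∞; (2) sup_{n≥1} n·‖g_n‖ < ∞ and Σ_{n≥0} ‖g_n‖ < ∞. Then the sequence √n·Σ_{k=0}^{n} P_{n−k}(g_k) converges in 𝓑 to P(G), where G = Σ_{k≥0} g_k. -/
open Filter Finset

private lemma sum_inv_sqrt_le (L : ℕ) :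
    ∑ m ∈ Finset.range L, (1 / Real.sqrt ((m : ℝ) + 1)) ≤ 2 * Real.sqrt L := by
  induction L with
  | zero => simp
  | succ L ih =>
    rw [Finset.sum_range_succ]
    have h1 : (0:ℝ) ≤ (L:ℝ) := Nat.cast_nonneg L
    have hs : (0:ℝ) < Real.sqrt ((L:ℝ)+1) := Real.sqrt_pos.mpr (by positivity)
    have hmono : Real.sqrt L ≤ Real.sqrt ((L:ℝ)+1) := Real.sqrt_le_sqrt (by linarith)
    have key : 1 / Real.sqrt ((L:ℝ)+1) ≤ 2 * Real.sqrt ((L:ℝ)+1) - 2 * Real.sqrt L := by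
      rw [div_le_iff₀ hs]
      nlinarith [Real.sq_sqrt h1, Real.sq_sqrt (show (0:ℝ) ≤ (L:ℝ)+1 by linarith),
        Real.sqrt_nonneg (L:ℝ), sq_nonneg (Real.sqrt ((L:ℝ)+1) - Real.sqrt L)]
    push_cast
    linarith

private lemma sum_Ico_inv_sqrt (n L : ℕ) (hL : 1 ≤ L) (hLn : L ≤ n) :
    ∑ k ∈ Finset.Ico (n - L + 1) n, (1 / Real.sqrt ((n - k : ℕ) : ℝ)) ≤ 2 * Real.sqrt L := by
  rw [Finset.sum_Ico_eq_sum_range]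
  have hcount : n - (n - L + 1) = L - 1 := by omega
  rw [hcount]
  set f : ℕ → ℝ := fun j => 1 / Real.sqrt ((j : ℝ) + 1) with hf
  have hre : ∀ j ∈ Finset.range (L - 1),
      (1 : ℝ) / Real.sqrt ((n - (n - L + 1 + j) : ℕ) : ℝ)
        = f ((L - 1) - 1 - j) := by
    intro j hj
    simp only [Finset.mem_range] at hj
    have h : n - (n - L + 1 + j) = (L - 1) - 1 - j + 1 := by omega
    rw [h, hf]
    push_cast
    norm_num
  rw [Finset.sum_congr rfl hre, Finset.sum_range_reflect]
  calc ∑ j ∈ Finset.range (L-1), f j ≤ 2 * Real.sqrt ((L-1 : ℕ) : ℝ) :=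
        sum_inv_sqrt_le (L-1)
    _ ≤ 2 * Real.sqrt L := by
        gcongr
        exact_mod_cast Nat.sub_le L 1

private lemma cesaro (u : ℕ → ℝ) (hu : ∀ k, 0 ≤ u k) (hsum : Summable u)
    {η : ℝ} (hη : 0 < η) :
    ∀ᶠ n : ℕ in atTop, ∑ k ∈ Finset.range (n + 1), (k : ℝ) * u k ≤ η * n := by
  set s := ∑' k, u k with hs
  have hps : Tendsto (fun n => ∑ k ∈ Finset.range n, u k) atTop (nhds s) :=
    hsum.hasSum.tendsto_sum_nat
  obtain ⟨K, hK⟩ := (hps.eventually (lt_mem_nhds (show s - η/2 < s by linarith))).exists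
  set A := ∑ k ∈ Finset.range K, (k:ℝ) * u k with hA
  have hAnn : 0 ≤ A := Finset.sum_nonneg fun k _ => mul_nonneg (Nat.cast_nonneg k) (hu k)
  have ev1 : ∀ᶠ n : ℕ in atTop, (2 * A / η : ℝ) ≤ (n : ℝ) :=
    tendsto_natCast_atTop_atTop.eventually_ge_atTop _
  filter_upwards [ev1, eventually_ge_atTop K] with n hn1 hn2
  have hsplit : ∑ k ∈ Finset.range (n+1), (k:ℝ) * u k
      = A + ∑ k ∈ Finset.Ico K (n+1), (k:ℝ) * u k := by
    rw [hA, ← Finset.sum_range_add_sum_Ico _ (by omega : K ≤ n + 1)]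
  have h2 : ∑ k ∈ Finset.Ico K (n+1), (k:ℝ) * u k ≤ (n:ℝ) * ∑ k ∈ Finset.Ico K (n+1), u k := by
    rw [Finset.mul_sum]
    refine Finset.sum_le_sum fun k hk => ?_
    simp only [Finset.mem_Ico] at hk
    exact mul_le_mul_of_nonneg_right (by exact_mod_cast Nat.lt_succ_iff.mp hk.2) (hu k)
  have h3 : ∑ k ∈ Finset.Ico K (n+1), u k ≤ s - ∑ k ∈ Finset.range K, u k := by
    have hsum' : ∑ k ∈ Finset.range K, u k + ∑ k ∈ Finset.Ico K (n+1), u k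
        = ∑ k ∈ Finset.range (n+1), u k :=
      Finset.sum_range_add_sum_Ico _ (by omega : K ≤ n + 1)
    have := Summable.sum_le_tsum (Finset.range (n+1)) (fun k _ => hu k) hsum
    linarith
  have h4 : s - ∑ k ∈ Finset.range K, u k ≤ η / 2 := by linarith
  have h5 : (n:ℝ) * ∑ k ∈ Finset.Ico K (n+1), u k ≤ (n:ℝ) * (η/2) := by
    refine mul_le_mul_of_nonneg_left (le_trans h3 h4) (Nat.cast_nonneg n)
  have hn0 : (0:ℝ) ≤ (n:ℝ) := Nat.cast_nonneg n
  have : A ≤ η/2 * n := by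
    rw [div_le_iff₀ hη] at hn1
    nlinarith
  linarith [hsplit ▸ (by nlinarith [le_trans h2 h5] : A + ∑ k ∈ Finset.Ico K (n+1), (k:ℝ) * u k ≤ η * n)]

set_option maxHeartbeats 8000000 in
/-- Functional renewal-type lemma: if `√n Pₙ → P` in operator norm, `sup_{n≥1} n ‖gₙ‖ < ∞`
and `Σ ‖gₙ‖ < ∞`, then `√n Σ_{k=0}^n P_{n-k}(g_k) → P(G)` where `G = Σ_k g_k`. -/
theorem convolution_sqrt_limit
    {B : Type*} [NormedAddCommGroup B] [NormedSpace ℝ B] [CompleteSpace B]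
    (P : ℕ → B →L[ℝ] B) (g : ℕ → B)
    (Plim : B →L[ℝ] B)
    (h1 : Tendsto (fun n : ℕ => Real.sqrt n • P n) atTop (nhds Plim))
    (h2 : ∃ M : ℝ, ∀ n : ℕ, 1 ≤ n → (n : ℝ) * ‖g n‖ ≤ M)
    (h3 : Summable fun n => ‖g n‖) :
    Tendsto (fun n : ℕ => Real.sqrt n • ∑ k ∈ Finset.range (n + 1), (P (n - k)) (g k))
      atTop (nhds (Plim (∑' k, g k))) := by
  classical
  obtain ⟨M₀, hM₀⟩ := h2
  set M : ℝ := max M₀ 0 with hMdef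
  have hM0 : 0 ≤ M := le_max_right _ _
  have hMg : ∀ n : ℕ, 1 ≤ n → (n : ℝ) * ‖g n‖ ≤ M := fun n hn =>
    (hM₀ n hn).trans (le_max_left _ _)
  clear_value M
  have hgs : Summable g := h3.of_norm
  set G : B := ∑' k, g k with hGdef
  set S : ℝ := ∑' k, ‖g k‖ with hSdef
  have hS0 : 0 ≤ S := tsum_nonneg fun k => norm_nonneg _
  have hpart : ∀ s : Finset ℕ, ∑ k ∈ s, ‖g k‖ ≤ S := fun s =>
    Summable.sum_le_tsum s (fun k _ => norm_nonneg _) h3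
  clear_value S
  -- bound on ‖√m • P m - Plim‖
  have hQ0 : Tendsto (fun m : ℕ => ‖Real.sqrt m • P m - Plim‖) atTop (nhds 0) := by
    have h := h1.sub (tendsto_const_nhds (x := Plim))
    rw [sub_self] at h
    simpa using h.norm
  obtain ⟨D₀, hD₀⟩ := hQ0.bddAbove_range
  set D : ℝ := max D₀ 0 with hDdef
  have hD0 : 0 ≤ D := le_max_right _ _
  have hD : ∀ m : ℕ, ‖Real.sqrt m • P m - Plim‖ ≤ D := fun m =>
    le_trans (hD₀ (Set.mem_range_self m)) (le_max_left _ _)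
  clear_value D
  have hP1 : (0:ℝ) ≤ ‖Plim‖ := norm_nonneg _
  -- the main estimate: F n → 0
  have hF : Tendsto (fun n : ℕ =>
      ∑ k ∈ Finset.range (n+1), ‖(Real.sqrt n • P (n-k) - Plim) (g k)‖) atTop (nhds 0) := by
    rw [NormedAddCommGroup.tendsto_nhds_zero]
    intro η hη
    -- choose ε
    set W : ℝ := 48 * (M+1) * (D + ‖Plim‖ + 1) with hWdef
    have hW0 : 0 < W := by rw [hWdef]; positivity
    clear_value W
    set ε : ℝ := min (1/4) ((η / W)^2) with hεdef
    have hε0 : 0 < ε := lt_min (by norm_num) (by positivity)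
    have hε4 : ε ≤ 1/4 := min_le_left _ _
    have hsqε : Real.sqrt ε ≤ η / W := by
      refine (Real.sqrt_le_sqrt (min_le_right _ _)).trans ?_
      rw [Real.sqrt_sq (by positivity)]
    have hsqε0 : 0 < Real.sqrt ε := Real.sqrt_pos.mpr hε0
    clear_value ε
    -- choose ε₁ and N₀
    set ε₁ : ℝ := η * Real.sqrt ε / (8 * (S+1)) with hε₁def
    have hε₁0 : 0 < ε₁ := by rw [hε₁def]; positivity
    clear_value ε₁
    obtain ⟨N₀, hN₀⟩ : ∃ N₀ : ℕ, ∀ m, N₀ ≤ m → ‖Real.sqrt m • P m - Plim‖ ≤ ε₁ := by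
      obtain ⟨N₀, h⟩ := (Metric.tendsto_atTop.mp hQ0) ε₁ hε₁0
      refine ⟨N₀, fun m hm => ?_⟩
      have := h m hm
      rw [Real.dist_eq, sub_zero] at this
      exact le_of_lt (lt_of_abs_lt this)
    -- Cesàro
    have hces := cesaro (fun k => ‖g k‖) (fun k => norm_nonneg _) h3
      (show 0 < η * ε / (8 * (‖Plim‖ + 1)) by positivity)
    -- region C eventual bound
    have hCt : Tendsto (fun n : ℕ => ‖P 0‖ * M * Real.sqrt (1/(n:ℝ)) + ‖Plim‖ * M * (1/(n:ℝ)))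
        atTop (nhds 0) := by
      have t1 : Tendsto (fun n : ℕ => (1:ℝ)/(n:ℝ)) atTop (nhds 0) :=
        tendsto_const_div_atTop_nhds_zero_nat 1
      have t2 : Tendsto (fun n : ℕ => Real.sqrt (1/(n:ℝ))) atTop (nhds 0) := by
        have h := (Real.continuous_sqrt.tendsto 0).comp t1
        simpa only [Function.comp_def, Real.sqrt_zero] using h
      have := (t2.const_mul (‖P 0‖ * M)).add (t1.const_mul (‖Plim‖ * M))
      simpa using this
    have hCev : ∀ᶠ n : ℕ in atTop,
        ‖P 0‖ * M * Real.sqrt (1/(n:ℝ)) + ‖Plim‖ * M * (1/(n:ℝ)) ≤ η/8 :=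
      hCt.eventually (eventually_le_nhds (by positivity))
    have evn : ∀ᶠ n : ℕ in atTop, (max 4 (((N₀:ℝ) + 1) / ε) : ℝ) ≤ (n:ℝ) :=
      tendsto_natCast_atTop_atTop.eventually_ge_atTop _
    filter_upwards [evn, hces, hCev] with n hn hces' hC'
    -- basic facts about n and L
    have hn4 : (4:ℝ) ≤ (n:ℝ) := le_trans (le_max_left _ _) hn
    have hn0 : (0:ℝ) < (n:ℝ) := by linarith
    have hn1 : 1 ≤ n := by exact_mod_cast (show (1:ℝ) ≤ (n:ℝ) by linarith)
    have hεn : (N₀:ℝ) + 1 ≤ ε * n := by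
      have h := le_trans (le_max_right _ _) hn
      rw [div_le_iff₀ hε0] at h
      linarith
    have hεn1 : (1:ℝ) ≤ ε * n := by
      have : (0:ℝ) ≤ (N₀:ℝ) := Nat.cast_nonneg _
      linarith
    set L : ℕ := ⌈ε * (n:ℝ)⌉₊ with hLdef
    have hL1 : 1 ≤ L := by
      rw [hLdef]
      exact Nat.one_le_ceil_iff.mpr (by positivity)
    have hLge : (ε * (n:ℝ)) ≤ (L:ℝ) := Nat.le_ceil _
    have hLle : (L:ℝ) ≤ ε * n + 1 := le_of_lt (Nat.ceil_lt_add_one (by positivity))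
    have hLle2 : (L:ℝ) ≤ 2 * (ε * n) := by linarith
    have hL2n : (L:ℝ) ≤ (n:ℝ)/2 := by nlinarith
    have hLn : L ≤ n := by
      have : (L:ℝ) ≤ (n:ℝ) := by linarith
      exact_mod_cast this
    have hnL2 : (n:ℝ)/2 ≤ ((n - L : ℕ):ℝ) := by
      rw [Nat.cast_sub hLn]; linarith
    have hnL2' : 2 ≤ n - L := by
      have : (2:ℝ) ≤ ((n - L : ℕ):ℝ) := by linarith
      exact_mod_cast this
    clear_value L
    -- generic term bound
    have hterm : ∀ k, k < n → ‖Real.sqrt n • P (n-k) - Plim‖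
        ≤ (Real.sqrt n / Real.sqrt ((n-k : ℕ):ℝ)) * ‖Real.sqrt ((n-k:ℕ):ℝ) • P (n-k) - Plim‖
          + (Real.sqrt n / Real.sqrt ((n-k:ℕ):ℝ) - 1) * ‖Plim‖ := by
      intro k hk
      set m : ℕ := n - k with hm
      have hm1 : 1 ≤ m := by omega
      have hmn : m ≤ n := by omega
      have hsm : (0:ℝ) < Real.sqrt (m:ℝ) := Real.sqrt_pos.mpr (by exact_mod_cast hm1)
      set r : ℝ := Real.sqrt n / Real.sqrt (m:ℝ) with hr
      have hr1 : 1 ≤ r := (one_le_div hsm).mpr (Real.sqrt_le_sqrt (by exact_mod_cast hmn))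
      have hsmul : Real.sqrt n • P m = r • (Real.sqrt (m:ℝ) • P m) := by
        rw [smul_smul, hr, div_mul_cancel₀ _ (ne_of_gt hsm)]
      have hdecomp : Real.sqrt n • P m - Plim
          = r • (Real.sqrt (m:ℝ) • P m - Plim) + (r - 1) • Plim := by
        rw [hsmul]; module
      rw [hdecomp]
      refine (norm_add_le _ _).trans ?_
      rw [norm_smul r (Real.sqrt (m:ℝ) • P m - Plim), norm_smul (r-1) Plim,
        Real.norm_of_nonneg (by linarith : (0:ℝ) ≤ r),
        Real.norm_of_nonneg (by linarith : (0:ℝ) ≤ r - 1)]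
    -- region A
    have hA : ∑ k ∈ Finset.range (n - L + 1), ‖(Real.sqrt n • P (n-k) - Plim) (g k)‖
        ≤ ε₁ / Real.sqrt ε * S
          + ‖Plim‖ / (ε * n) * ∑ k ∈ Finset.range (n+1), (k:ℝ) * ‖g k‖ := by
      have step : ∀ k ∈ Finset.range (n - L + 1),
          ‖(Real.sqrt n • P (n-k) - Plim) (g k)‖
          ≤ ε₁ / Real.sqrt ε * ‖g k‖ + ‖Plim‖ / (ε * n) * ((k:ℝ) * ‖g k‖) := by
        intro k hk
        simp only [Finset.mem_range] at hk
        have hkn : k ≤ n - L := by omega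
        have hkltn : k < n := by omega
        set m : ℕ := n - k with hm
        have hmL : L ≤ m := by omega
        have hmεn : ε * n ≤ (m:ℝ) := le_trans hLge (by exact_mod_cast hmL)
        have hmN₀ : N₀ ≤ m := by
          have : (N₀:ℝ) ≤ (m:ℝ) := by linarith
          exact_mod_cast this
        have hm0 : (0:ℝ) < (m:ℝ) := lt_of_lt_of_le (by positivity) hmεn
        set r : ℝ := Real.sqrt n / Real.sqrt (m:ℝ) with hr
        have hsmpos : 0 < Real.sqrt (m:ℝ) := Real.sqrt_pos.mpr hm0
        have hr1 : 1 ≤ r := (one_le_div hsmpos).mpr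
          (Real.sqrt_le_sqrt (by exact_mod_cast (Nat.sub_le n k)))
        have hrsq : r^2 = (n:ℝ)/(m:ℝ) := by
          rw [hr, div_pow, Real.sq_sqrt (Nat.cast_nonneg n), Real.sq_sqrt (le_of_lt hm0)]
        have hrle : r ≤ 1 / Real.sqrt ε := by
          have hsq : r^2 ≤ 1/ε := by
            rw [hrsq, div_le_div_iff₀ hm0 hε0]; nlinarith
          have h := Real.sqrt_le_sqrt hsq
          rw [Real.sqrt_sq (by linarith : (0:ℝ) ≤ r)] at h
          calc r ≤ Real.sqrt (1/ε) := h
            _ = 1 / Real.sqrt ε := by rw [one_div, Real.sqrt_inv, one_div]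
        have hmcast : (m:ℝ) = (n:ℝ) - (k:ℝ) := by
          rw [hm, Nat.cast_sub (le_of_lt hkltn)]
        have hrm1 : r - 1 ≤ (k:ℝ) / (ε*n) := by
          have h2 : r - 1 ≤ r^2 - 1 := by nlinarith
          have h3 : r^2 - 1 = ((n:ℝ) - (m:ℝ))/(m:ℝ) := by
            rw [hrsq]; field_simp
          have h5 : (k:ℝ)/(m:ℝ) ≤ (k:ℝ)/(ε*n) :=
            div_le_div_of_nonneg_left (Nat.cast_nonneg k) (by positivity) hmεn
          calc r - 1 ≤ ((n:ℝ)-(m:ℝ))/(m:ℝ) := h3 ▸ h2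
            _ = (k:ℝ)/(m:ℝ) := by rw [hmcast]; ring_nf
            _ ≤ _ := h5
        have hop := hterm k hkltn
        have hQsmall : ‖Real.sqrt (m:ℝ) • P m - Plim‖ ≤ ε₁ := hN₀ m hmN₀
        calc ‖(Real.sqrt n • P (n-k) - Plim) (g k)‖
            ≤ ‖Real.sqrt n • P (n-k) - Plim‖ * ‖g k‖ :=
              ContinuousLinearMap.le_opNorm _ _
          _ ≤ (r * ε₁ + ((k:ℝ)/(ε*n)) * ‖Plim‖) * ‖g k‖ := by
              refine mul_le_mul_of_nonneg_right ?_ (norm_nonneg _)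
              refine hop.trans ?_
              have e1 : r * ‖Real.sqrt (m:ℝ) • P m - Plim‖ ≤ r * ε₁ :=
                mul_le_mul_of_nonneg_left hQsmall (by linarith)
              have e2 : (r - 1) * ‖Plim‖ ≤ ((k:ℝ)/(ε*n)) * ‖Plim‖ :=
                mul_le_mul_of_nonneg_right hrm1 hP1
              exact add_le_add e1 e2
          _ ≤ ε₁ / Real.sqrt ε * ‖g k‖ + ‖Plim‖ / (ε * n) * ((k:ℝ) * ‖g k‖) := by
              have e1 : r * ε₁ ≤ ε₁ / Real.sqrt ε := by
                rw [div_eq_mul_inv, mul_comm ε₁]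
                exact mul_le_mul_of_nonneg_right (by rw [← one_div]; exact hrle) hε₁0.le
              have e2 : (0:ℝ) ≤ ‖g k‖ := norm_nonneg _
              have e3 := mul_le_mul_of_nonneg_right e1 e2
              have e4 : ((k:ℝ)/(ε*n)) * ‖Plim‖ * ‖g k‖
                  = ‖Plim‖ / (ε * n) * ((k:ℝ) * ‖g k‖) := by ring
              nlinarith
      calc ∑ k ∈ Finset.range (n - L + 1), ‖(Real.sqrt n • P (n-k) - Plim) (g k)‖
          ≤ ∑ k ∈ Finset.range (n - L + 1),
            (ε₁ / Real.sqrt ε * ‖g k‖ + ‖Plim‖ / (ε * n) * ((k:ℝ) * ‖g k‖)) :=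
            Finset.sum_le_sum step
        _ = ε₁ / Real.sqrt ε * ∑ k ∈ Finset.range (n - L + 1), ‖g k‖
            + ‖Plim‖ / (ε * n) * ∑ k ∈ Finset.range (n - L + 1), ((k:ℝ) * ‖g k‖) := by
            rw [Finset.sum_add_distrib, Finset.mul_sum, Finset.mul_sum]
        _ ≤ ε₁ / Real.sqrt ε * S
            + ‖Plim‖ / (ε * n) * ∑ k ∈ Finset.range (n+1), ((k:ℝ) * ‖g k‖) := by
            have b1 : ∑ k ∈ Finset.range (n - L + 1), ‖g k‖ ≤ S := hpart _
            have b2 : ∑ k ∈ Finset.range (n - L + 1), ((k:ℝ) * ‖g k‖)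
                ≤ ∑ k ∈ Finset.range (n+1), ((k:ℝ) * ‖g k‖) := by
              refine Finset.sum_le_sum_of_subset_of_nonneg
                (Finset.range_subset_range.mpr (Nat.succ_le_succ (Nat.sub_le n L))) ?_
              intro k _ _
              exact mul_nonneg (Nat.cast_nonneg k) (norm_nonneg _)
            have c1 : (0:ℝ) ≤ ε₁ / Real.sqrt ε := by positivity
            have c2 : (0:ℝ) ≤ ‖Plim‖ / (ε * n) := by positivity
            exact add_le_add (mul_le_mul_of_nonneg_left b1 c1)
              (mul_le_mul_of_nonneg_left b2 c2)
    -- region B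
    have hB : ∑ k ∈ Finset.Ico (n - L + 1) n, ‖(Real.sqrt n • P (n-k) - Plim) (g k)‖
        ≤ (2*M*(D+‖Plim‖)/(n:ℝ) * Real.sqrt n) * (2 * Real.sqrt L) := by
      have step : ∀ k ∈ Finset.Ico (n-L+1) n,
          ‖(Real.sqrt n • P (n-k) - Plim) (g k)‖
          ≤ (2*M*(D+‖Plim‖)/(n:ℝ) * Real.sqrt n) * (1 / Real.sqrt ((n-k:ℕ):ℝ)) := by
        intro k hk
        simp only [Finset.mem_Ico] at hk
        have hkltn : k < n := hk.2
        have hk1 : 1 ≤ k := by omega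
        have hkhalf : (n:ℝ)/2 ≤ (k:ℝ) := by
          have h1 : n - L ≤ k := by omega
          have h2 : ((n - L:ℕ):ℝ) ≤ (k:ℝ) := by exact_mod_cast h1
          linarith
        have hkpos : (0:ℝ) < (k:ℝ) := by exact_mod_cast hk1
        have hgk : ‖g k‖ ≤ 2*M/(n:ℝ) := by
          have h2 : ‖g k‖ ≤ M / (k:ℝ) := by
            rw [le_div_iff₀ hkpos]; linarith [hMg k hk1]
          calc ‖g k‖ ≤ M / (k:ℝ) := h2
            _ ≤ 2*M/(n:ℝ) := by
              rw [div_le_div_iff₀ hkpos hn0]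
              nlinarith
        set m : ℕ := n - k with hm
        have hm1 : 1 ≤ m := by omega
        have hm0 : (0:ℝ) < (m:ℝ) := by exact_mod_cast hm1
        have hsmpos : 0 < Real.sqrt (m:ℝ) := Real.sqrt_pos.mpr hm0
        set r : ℝ := Real.sqrt n / Real.sqrt (m:ℝ) with hr
        have hr1 : 1 ≤ r := (one_le_div hsmpos).mpr
          (Real.sqrt_le_sqrt (by exact_mod_cast (Nat.sub_le n k)))
        have hop := hterm k hkltn
        have hQ : ‖Real.sqrt ((m:ℕ):ℝ) • P m - Plim‖ ≤ D := hD m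
        have hopbd : ‖Real.sqrt n • P (n-k) - Plim‖ ≤ r * (D + ‖Plim‖) := by
          refine hop.trans ?_
          have e1 : r * ‖Real.sqrt ((m:ℕ):ℝ) • P m - Plim‖ ≤ r * D :=
            mul_le_mul_of_nonneg_left hQ (by linarith)
          have e2 : (r - 1) * ‖Plim‖ ≤ r * ‖Plim‖ :=
            mul_le_mul_of_nonneg_right (by linarith) hP1
          calc _ ≤ r * D + r * ‖Plim‖ := add_le_add e1 e2
            _ = r * (D + ‖Plim‖) := by ring
        calc ‖(Real.sqrt n • P (n-k) - Plim) (g k)‖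
            ≤ ‖Real.sqrt n • P (n-k) - Plim‖ * ‖g k‖ :=
              ContinuousLinearMap.le_opNorm _ _
          _ ≤ (r * (D + ‖Plim‖)) * (2*M/(n:ℝ)) := by
              refine mul_le_mul hopbd hgk (norm_nonneg _) ?_
              have : (0:ℝ) ≤ r := by linarith
              positivity
          _ = (2*M*(D+‖Plim‖)/(n:ℝ) * Real.sqrt n) * (1 / Real.sqrt ((m:ℕ):ℝ)) := by
              rw [hr]; ring
      calc ∑ k ∈ Finset.Ico (n - L + 1) n, ‖(Real.sqrt n • P (n-k) - Plim) (g k)‖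
          ≤ ∑ k ∈ Finset.Ico (n - L + 1) n,
            (2*M*(D+‖Plim‖)/(n:ℝ) * Real.sqrt n) * (1 / Real.sqrt ((n-k:ℕ):ℝ)) :=
            Finset.sum_le_sum step
        _ = (2*M*(D+‖Plim‖)/(n:ℝ) * Real.sqrt n)
            * ∑ k ∈ Finset.Ico (n - L + 1) n, (1 / Real.sqrt ((n-k:ℕ):ℝ)) := by
            rw [Finset.mul_sum]
        _ ≤ (2*M*(D+‖Plim‖)/(n:ℝ) * Real.sqrt n) * (2 * Real.sqrt L) := by
            refine mul_le_mul_of_nonneg_left (sum_Ico_inv_sqrt n L hL1 hLn) ?_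
            positivity
    -- numeric bound on region B
    have hBnum : (2*M*(D+‖Plim‖)/(n:ℝ) * Real.sqrt n) * (2 * Real.sqrt L) ≤ η/8 := by
      have hsqL : Real.sqrt (L:ℝ) ≤ Real.sqrt 2 * Real.sqrt ε * Real.sqrt n := by
        rw [← Real.sqrt_mul (by norm_num : (0:ℝ) ≤ 2), ← Real.sqrt_mul (by positivity)]
        exact Real.sqrt_le_sqrt (by nlinarith)
      have hsq2 : Real.sqrt 2 ≤ 3/2 := by
        nlinarith [Real.sq_sqrt (show (0:ℝ) ≤ 2 by norm_num), Real.sqrt_nonneg 2]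
      have hmul : Real.sqrt (n:ℝ) * Real.sqrt (n:ℝ) = (n:ℝ) :=
        Real.mul_self_sqrt (Nat.cast_nonneg n)
      have hsqn0 : (0:ℝ) ≤ Real.sqrt n := Real.sqrt_nonneg _
      have h1 : (2*M*(D+‖Plim‖)/(n:ℝ) * Real.sqrt n) * (2 * Real.sqrt L)
          ≤ (2*M*(D+‖Plim‖)/(n:ℝ) * Real.sqrt n) * (2 * ((3/2) * Real.sqrt ε * Real.sqrt n)) := by
        refine mul_le_mul_of_nonneg_left ?_ (by positivity)
        have h5 : Real.sqrt 2 * Real.sqrt ε * Real.sqrt n ≤ (3/2) * Real.sqrt ε * Real.sqrt n := by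
          calc Real.sqrt 2 * Real.sqrt ε * Real.sqrt n
              = Real.sqrt 2 * (Real.sqrt ε * Real.sqrt n) := by ring
            _ ≤ (3/2) * (Real.sqrt ε * Real.sqrt n) :=
              mul_le_mul_of_nonneg_right hsq2 (by positivity)
            _ = (3/2) * Real.sqrt ε * Real.sqrt n := by ring
        linarith [hsqL.trans h5]
      have h2 : (2*M*(D+‖Plim‖)/(n:ℝ) * Real.sqrt n) * (2 * ((3/2) * Real.sqrt ε * Real.sqrt n))
          = 6*M*(D+‖Plim‖) * Real.sqrt ε := by
        have hn' : (n:ℝ) ≠ 0 := ne_of_gt hn0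
        rw [show (2*M*(D+‖Plim‖)/(n:ℝ) * Real.sqrt n) * (2 * ((3/2) * Real.sqrt ε * Real.sqrt n)) = 6*M*(D+‖Plim‖) * Real.sqrt ε * (Real.sqrt n * Real.sqrt n) / n by ring, hmul, mul_div_assoc, div_self hn', mul_one]
      have h3 : 6*M*(D+‖Plim‖) * Real.sqrt ε ≤ 6*(M+1)*(D+‖Plim‖+1) * (η / W) := by
        have e1 : 6*M*(D+‖Plim‖) ≤ 6*(M+1)*(D+‖Plim‖+1) := by nlinarith
        have e2 : 6*M*(D+‖Plim‖) * Real.sqrt ε ≤ 6*(M+1)*(D+‖Plim‖+1) * Real.sqrt ε :=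
          mul_le_mul_of_nonneg_right e1 hsqε0.le
        have e3 : 6*(M+1)*(D+‖Plim‖+1) * Real.sqrt ε ≤ 6*(M+1)*(D+‖Plim‖+1) * (η / W) :=
          mul_le_mul_of_nonneg_left hsqε (by positivity)
        linarith
      have h4 : 6*(M+1)*(D+‖Plim‖+1) * (η / W) = η/8 := by
        rw [hWdef]
        field_simp
        ring
      linarith
    -- region C
    have hCbd : ‖(Real.sqrt n • P (n-n) - Plim) (g n)‖ ≤ η/8 := by
      rw [Nat.sub_self]
      have hop : ‖Real.sqrt n • P 0 - Plim‖ ≤ Real.sqrt n * ‖P 0‖ + ‖Plim‖ := by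
        refine (norm_sub_le _ _).trans ?_
        rw [norm_smul (Real.sqrt (n:ℝ)) (P 0), Real.norm_of_nonneg (Real.sqrt_nonneg _)]
      have hgn : ‖g n‖ ≤ M / (n:ℝ) := by
        rw [le_div_iff₀ hn0]
        linarith [hMg n hn1]
      have hsqn0 : (0:ℝ) < Real.sqrt n := Real.sqrt_pos.mpr hn0
      have hmul : Real.sqrt (n:ℝ) * Real.sqrt (n:ℝ) = (n:ℝ) :=
        Real.mul_self_sqrt (Nat.cast_nonneg n)
      calc ‖(Real.sqrt n • P 0 - Plim) (g n)‖
          ≤ ‖Real.sqrt n • P 0 - Plim‖ * ‖g n‖ := ContinuousLinearMap.le_opNorm _ _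
        _ ≤ (Real.sqrt n * ‖P 0‖ + ‖Plim‖) * (M / (n:ℝ)) := by
            refine mul_le_mul hop hgn (norm_nonneg _) ?_
            positivity
        _ = ‖P 0‖ * M * Real.sqrt (1/(n:ℝ)) + ‖Plim‖ * M * (1/(n:ℝ)) := by
            rw [one_div, Real.sqrt_inv]
            have hinv : Real.sqrt (n:ℝ) / (n:ℝ) = (Real.sqrt (n:ℝ))⁻¹ :=
              Real.sqrt_div_self
            rw [← hinv]
            ring
        _ ≤ η/8 := hC'
    -- assemble
    have hsplit : ∑ k ∈ Finset.range (n+1), ‖(Real.sqrt n • P (n-k) - Plim) (g k)‖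
        = (∑ k ∈ Finset.range (n - L + 1), ‖(Real.sqrt n • P (n-k) - Plim) (g k)‖)
          + (∑ k ∈ Finset.Ico (n - L + 1) n, ‖(Real.sqrt n • P (n-k) - Plim) (g k)‖)
          + ‖(Real.sqrt n • P (n-n) - Plim) (g n)‖ := by
      rw [Finset.sum_range_succ, ← Finset.sum_range_add_sum_Ico
        (fun k => ‖(Real.sqrt n • P (n-k) - Plim) (g k)‖) (by omega : n - L + 1 ≤ n)]
    have hA2 : ε₁ / Real.sqrt ε * S ≤ η/8 := by
      have e1 : ε₁ / Real.sqrt ε = η / (8 * (S+1)) := by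
        rw [hε₁def]
        field_simp
      rw [e1]
      rw [div_mul_eq_mul_div, div_le_div_iff₀ (by positivity) (by norm_num)]
      nlinarith
    have hA3 : ‖Plim‖ / (ε * n) * ∑ k ∈ Finset.range (n+1), ((k:ℝ) * ‖g k‖) ≤ η/8 := by
      have e0 : (0:ℝ) ≤ ‖Plim‖ / (ε * n) := by positivity
      have e1 : ‖Plim‖ / (ε * n) * ∑ k ∈ Finset.range (n+1), ((k:ℝ) * ‖g k‖)
          ≤ ‖Plim‖ / (ε * n) * (η * ε / (8 * (‖Plim‖ + 1)) * n) :=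
        mul_le_mul_of_nonneg_left hces' e0
      have e2 : ‖Plim‖ / (ε * n) * (η * ε / (8 * (‖Plim‖ + 1)) * n)
          = ‖Plim‖ * η / (8 * (‖Plim‖ + 1)) := by
        field_simp
      have e3 : ‖Plim‖ * η / (8 * (‖Plim‖ + 1)) ≤ η/8 := by
        rw [div_le_div_iff₀ (by positivity) (by norm_num)]
        nlinarith
      linarith
    have htotal : ∑ k ∈ Finset.range (n+1), ‖(Real.sqrt n • P (n-k) - Plim) (g k)‖
        ≤ η/8 + η/8 + η/8 + η/8 := by
      rw [hsplit]
      have := hA.trans (add_le_add hA2 hA3)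
      linarith [hB.trans hBnum, hCbd]
    have hnonneg : (0:ℝ) ≤ ∑ k ∈ Finset.range (n+1), ‖(Real.sqrt n • P (n-k) - Plim) (g k)‖ :=
      Finset.sum_nonneg fun k _ => norm_nonneg _
    rw [Real.norm_eq_abs, abs_of_nonneg hnonneg]
    linarith
  -- tail of the series
  have htail : Tendsto (fun n : ℕ => ‖(∑ k ∈ Finset.range (n+1), g k) - G‖) atTop (nhds 0) := by
    have h := hgs.hasSum.tendsto_sum_nat
    have h2 : Tendsto (fun n : ℕ => ∑ k ∈ Finset.range (n+1), g k) atTop (nhds G) :=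
      h.comp (tendsto_add_atTop_nat 1)
    exact tendsto_iff_norm_sub_tendsto_zero.mp h2
  -- final assembly
  rw [tendsto_iff_norm_sub_tendsto_zero]
  have hkey : ∀ n : ℕ, ‖Real.sqrt n • ∑ k ∈ Finset.range (n+1), (P (n-k)) (g k) - Plim G‖
      ≤ (∑ k ∈ Finset.range (n+1), ‖(Real.sqrt n • P (n-k) - Plim) (g k)‖)
        + ‖Plim‖ * ‖(∑ k ∈ Finset.range (n+1), g k) - G‖ := by
    intro n
    have hid : Real.sqrt n • ∑ k ∈ Finset.range (n+1), (P (n-k)) (g k) - Plim G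
        = (∑ k ∈ Finset.range (n+1), (Real.sqrt n • P (n-k) - Plim) (g k))
          + Plim ((∑ k ∈ Finset.range (n+1), g k) - G) := by
      rw [map_sub, map_sum, Finset.smul_sum]
      simp only [ContinuousLinearMap.sub_apply, ContinuousLinearMap.coe_smul', Pi.smul_apply]
      rw [Finset.sum_sub_distrib]
      abel
    rw [hid]
    refine (norm_add_le _ _).trans ?_
    gcongr
    · exact norm_sum_le _ _
    · exact Plim.le_opNorm _
  refine squeeze_zero (fun n => norm_nonneg _) hkey ?_
  have := hF.add (htail.const_mul ‖Plim‖)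
  simpa using this
end

section
/- Let 𝓑 be a Banach space, (P_n)_{n≥0} a sequence of bounded linear operators on 𝓑 and (g_n)_{n≥0} a sequence of elements of 𝓑. Assume: (1) n^{3/2}·P_n converges in operator norm to a bounded operator P as n → ∞; (2) n^{3/2}·g_n converges in 𝓑 to some element g as n → ∞. Then the series 𝐏 = Σ_{k≥0} P_k converges in operator norm, the series 𝐆 = Σ_{k≥0} g_k converges in 𝓑, and the sequence n^{3/2}·Σ_{k=0}^{n} P_k(g_{n−k}) converges in 𝓑 to 𝐏(g) + P(𝐆). -/
open Filter Topology

noncomputable def ww (n : ℕ) : ℝ := (n : ℝ) ^ ((3 : ℝ) / 2)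

lemma ww_nonneg (n : ℕ) : 0 ≤ ww n := Real.rpow_nonneg (Nat.cast_nonneg n) _

lemma ww_pos {n : ℕ} (hn : 1 ≤ n) : 0 < ww n :=
  Real.rpow_pos_of_pos (by exact_mod_cast hn) _

lemma ww_mono {a b : ℕ} (h : a ≤ b) : ww a ≤ ww b :=
  Real.rpow_le_rpow (Nat.cast_nonneg a) (by exact_mod_cast h) (by norm_num)

lemma two_rpow_le : (2 : ℝ) ^ ((3:ℝ)/2) ≤ 3 := by
  have h2 : ((2:ℝ) ^ ((3:ℝ)/2)) ^ (2:ℕ) = 8 := by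
    rw [← Real.rpow_natCast ((2:ℝ) ^ ((3:ℝ)/2)) 2, ← Real.rpow_mul (by norm_num)]
    norm_num
  nlinarith [Real.rpow_nonneg (show (0:ℝ) ≤ 2 by norm_num) ((3:ℝ)/2)]

lemma ww_double {a b : ℕ} (h : a ≤ 2 * b) : ww a ≤ 3 * ww b := by
  have h1 : ww a ≤ ww (2 * b) := ww_mono h
  have h2 : ww (2 * b) = (2:ℝ) ^ ((3:ℝ)/2) * ww b := by
    unfold ww; push_cast
    rw [Real.mul_rpow (by norm_num) (Nat.cast_nonneg b)]
  have h3 : (2:ℝ) ^ ((3:ℝ)/2) * ww b ≤ 3 * ww b :=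
    mul_le_mul_of_nonneg_right two_rpow_le (ww_nonneg b)
  linarith

lemma ww_ratio (k : ℕ) : Tendsto (fun n : ℕ => ww n / ww (n - k)) atTop (𝓝 1) := by
  have hd : Tendsto (fun n : ℕ => (n : ℝ) - k) atTop atTop :=
    tendsto_atTop_add_const_right _ (-(k:ℝ)) tendsto_natCast_atTop_atTop
  have h0 : Tendsto (fun n : ℕ => 1 + (k:ℝ) * ((n:ℝ) - k)⁻¹) atTop (𝓝 1) := by
    have := (tendsto_inv_atTop_zero.comp hd).const_mul (k:ℝ)
    simpa using tendsto_const_nhds.add this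
  have hbase : Tendsto (fun n : ℕ => (n:ℝ) / ((n:ℝ) - k)) atTop (𝓝 1) := by
    refine h0.congr' ?_
    filter_upwards [eventually_ge_atTop (k+1)] with n hn
    have hk : (k:ℝ) < n := by exact_mod_cast Nat.lt_of_lt_of_le (Nat.lt_succ_self k) hn
    have hne : (n:ℝ) - k ≠ 0 := by linarith
    field_simp
    ring
  have h1 := hbase.rpow_const (p := (3:ℝ)/2) (Or.inl one_ne_zero)
  rw [Real.one_rpow] at h1
  refine h1.congr' ?_
  filter_upwards [eventually_ge_atTop (k+1)] with n hn
  have hk : k ≤ n := le_trans (Nat.le_succ k) hn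
  have hcast : ((n - k : ℕ) : ℝ) = (n:ℝ) - k := by push_cast [Nat.cast_sub hk]; ring
  have hkn : (0:ℝ) ≤ (n:ℝ) - k := by
    have : (k:ℝ) ≤ n := by exact_mod_cast hk
    linarith
  unfold ww
  rw [hcast, Real.div_rpow (Nat.cast_nonneg n) hkn]

/-- Functional renewal-type lemma: if `n^{3/2} Pₙ → P` in operator norm and
`n^{3/2} gₙ → g` in `𝓑`, then `𝐏 = Σ P_k` and `𝐆 = Σ g_k` converge and
`n^{3/2} Σ_{k=0}^n P_k(g_{n-k}) → 𝐏(g) + P(𝐆)`. -/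
theorem convolution_three_half_limit
    {B : Type*} [NormedAddCommGroup B] [NormedSpace ℝ B] [CompleteSpace B]
    (P : ℕ → B →L[ℝ] B) (g : ℕ → B)
    (Plim : B →L[ℝ] B) (glim : B)
    (h1 : Tendsto (fun n : ℕ => (n : ℝ) ^ ((3 : ℝ) / 2) • P n) atTop (nhds Plim))
    (h2 : Tendsto (fun n : ℕ => (n : ℝ) ^ ((3 : ℝ) / 2) • g n) atTop (nhds glim)) :
    Summable P ∧ Summable g ∧
    Tendsto (fun n : ℕ =>
        (n : ℝ) ^ ((3 : ℝ) / 2) • ∑ k ∈ Finset.range (n + 1), (P k) (g (n - k)))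
      atTop (nhds ((∑' k, P k) glim + Plim (∑' k, g k))) := by
  classical
  have h1' : Tendsto (fun n : ℕ => ww n • P n) atTop (𝓝 Plim) := h1
  have h2' : Tendsto (fun n : ℕ => ww n • g n) atTop (𝓝 glim) := h2
  obtain ⟨C1, hC1⟩ : ∃ C, ∀ n, ww n * ‖P n‖ ≤ C := by
    obtain ⟨C, hC⟩ := h1'.norm.bddAbove_range
    refine ⟨C, fun n => ?_⟩
    have := hC (Set.mem_range_self n)
    simp only [norm_smul (β := B →L[ℝ] B), Real.norm_eq_abs,
      abs_of_nonneg (ww_nonneg n)] at this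
    exact this
  obtain ⟨C2, hC2⟩ : ∃ C, ∀ n, ww n * ‖g n‖ ≤ C := by
    obtain ⟨C, hC⟩ := h2'.norm.bddAbove_range
    refine ⟨C, fun n => ?_⟩
    have := hC (Set.mem_range_self n)
    simp only [norm_smul, Real.norm_eq_abs, abs_of_nonneg (ww_nonneg n)] at this
    exact this
  have hC1nn : 0 ≤ C1 := by
    have := hC1 1
    nlinarith [ww_pos (le_refl 1), mul_nonneg (ww_nonneg 1) (norm_nonneg (P 1))]
  have hC2nn : 0 ≤ C2 := by
    nlinarith [hC2 1, mul_nonneg (ww_nonneg 1) (norm_nonneg (g 1))]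
  have hPle : ∀ n, 1 ≤ n → ‖P n‖ ≤ C1 / ww n := by
    intro n hn
    rw [le_div_iff₀ (ww_pos hn), mul_comm]
    exact hC1 n
  have hgle : ∀ n, 1 ≤ n → ‖g n‖ ≤ C2 / ww n := by
    intro n hn
    rw [le_div_iff₀ (ww_pos hn), mul_comm]
    exact hC2 n
  have hsum32 : Summable (fun n : ℕ => (ww n)⁻¹) :=
    Real.summable_nat_rpow_inv.2 (by norm_num)
  have hPnorm : Summable (fun n => ‖P n‖) := by
    refine Summable.of_norm_bounded_eventually (g := fun n => C1 * (ww n)⁻¹)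
      (hsum32.mul_left C1) ?_
    rw [Nat.cofinite_eq_atTop]
    filter_upwards [eventually_ge_atTop 1] with n hn
    rw [norm_norm]
    calc ‖P n‖ ≤ C1 / ww n := hPle n hn
      _ = C1 * (ww n)⁻¹ := div_eq_mul_inv _ _
  have hgnorm : Summable (fun n => ‖g n‖) := by
    refine Summable.of_norm_bounded_eventually (g := fun n => C2 * (ww n)⁻¹)
      (hsum32.mul_left C2) ?_
    rw [Nat.cofinite_eq_atTop]
    filter_upwards [eventually_ge_atTop 1] with n hn
    rw [norm_norm]
    calc ‖g n‖ ≤ C2 / ww n := hgle n hn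
      _ = C2 * (ww n)⁻¹ := div_eq_mul_inv _ _
  have hP : Summable P := hPnorm.of_norm
  have hg : Summable g := hgnorm.of_norm
  refine ⟨hP, hg, ?_⟩
  set F : ℕ → ℕ → B := fun n k => if 2*k ≤ n then ww n • P k (g (n-k)) else 0 with hF
  set G : ℕ → ℕ → B := fun n j => if 2*j < n then ww n • P (n-j) (g j) else 0 with hG
  -- decomposition identity
  have key : ∀ n : ℕ, ww n • ∑ k ∈ Finset.range (n+1), P k (g (n-k))
      = (∑' k, F n k) + (∑' j, G n j) := by
    intro n
    have hFt : ∑' k, F n k = ∑ k ∈ Finset.range (n+1), F n k := by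
      refine tsum_eq_sum ?_
      intro k hk
      simp only [Finset.mem_range, not_lt] at hk
      simp only [hF]
      rw [if_neg (by omega)]
    have hGt : ∑' j, G n j = ∑ j ∈ Finset.range (n+1), G n j := by
      refine tsum_eq_sum ?_
      intro j hj
      simp only [Finset.mem_range, not_lt] at hj
      simp only [hG]
      rw [if_neg (by omega)]
    have hFs : ∑ k ∈ Finset.range (n+1), F n k
        = ∑ k ∈ (Finset.range (n+1)).filter (fun k => 2*k ≤ n), ww n • P k (g (n-k)) := by
      rw [Finset.sum_filter]
    have hGs : ∑ j ∈ Finset.range (n+1), G n j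
        = ∑ j ∈ (Finset.range (n+1)).filter (fun j => 2*j < n), ww n • P (n-j) (g j) := by
      rw [Finset.sum_filter]
    have hbij : ∑ k ∈ (Finset.range (n+1)).filter (fun k => ¬ 2*k ≤ n), ww n • P k (g (n-k))
        = ∑ j ∈ (Finset.range (n+1)).filter (fun j => 2*j < n), ww n • P (n-j) (g j) := by
      refine Finset.sum_nbij' (fun k => n - k) (fun j => n - j) ?_ ?_ ?_ ?_ ?_
      · intro a ha
        simp only [Finset.mem_filter, Finset.mem_range, not_le] at ha ⊢
        omega
      · intro a ha
        simp only [Finset.mem_filter, Finset.mem_range, not_le] at ha ⊢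
        omega
      · intro a ha
        simp only [Finset.mem_filter, Finset.mem_range, not_le] at ha
        show n - (n - a) = a
        omega
      · intro a ha
        simp only [Finset.mem_filter, Finset.mem_range, not_le] at ha
        show n - (n - a) = a
        omega
      · intro a ha
        simp only [Finset.mem_filter, Finset.mem_range, not_le] at ha
        rw [Nat.sub_sub_self (by omega : a ≤ n)]
    rw [hFt, hGt, hFs, hGs, ← hbij, Finset.smul_sum,
      ← Finset.sum_filter_add_sum_filter_not (Finset.range (n+1)) (fun k => 2*k ≤ n)]
  set KF : ℝ := max (‖P 0‖ * C2) (9 * (C1 * C2)) with hKF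
  have hKFnn : 0 ≤ KF := le_trans (mul_nonneg (norm_nonneg _) hC2nn) (le_max_left _ _)
  have hFlim : Tendsto (fun n => ∑' k, F n k) atTop (𝓝 (∑' k, P k glim)) := by
    refine tendsto_tsum_of_dominated_convergence
      (bound := fun k => KF * (ww (k+1))⁻¹)
      (((summable_nat_add_iff 1).2 hsum32).mul_left KF) ?_ ?_
    · intro k
      have hq : Tendsto (fun n : ℕ => ww (n-k) • g (n-k)) atTop (𝓝 glim) :=
        h2'.comp (tendsto_sub_atTop_nat k)
      have hs : Tendsto (fun n : ℕ => (ww n / ww (n-k)) • (ww (n-k) • g (n-k)))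
          atTop (𝓝 ((1:ℝ) • glim)) := (ww_ratio k).smul hq
      have hc := ((P k).continuous.tendsto ((1:ℝ) • glim)).comp hs
      rw [one_smul] at hc
      refine Tendsto.congr' ?_ hc
      filter_upwards [eventually_ge_atTop (2*k+1)] with n hn
      have h2k : 2*k ≤ n := by omega
      have hnk : 1 ≤ n - k := by omega
      have hne : ww (n-k) ≠ 0 := ne_of_gt (ww_pos hnk)
      simp only [hF, Function.comp]
      rw [if_pos h2k, smul_smul, div_mul_cancel₀ _ hne, map_smul]
    · filter_upwards [eventually_ge_atTop 1] with n hn k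
      by_cases hcase : 2*k ≤ n
      · rcases Nat.eq_zero_or_pos k with rfl | hk
        · simp only [hF]
          rw [if_pos hcase, norm_smul, Real.norm_eq_abs, abs_of_nonneg (ww_nonneg n),
            Nat.sub_zero]
          have e1 : ‖P 0 (g n)‖ ≤ ‖P 0‖ * ‖g n‖ := (P 0).le_opNorm _
          have hw1 : ww (0+1) = 1 := by unfold ww; norm_num
          calc ww n * ‖P 0 (g n)‖ ≤ ww n * (‖P 0‖ * ‖g n‖) :=
                mul_le_mul_of_nonneg_left e1 (ww_nonneg n)
            _ = ‖P 0‖ * (ww n * ‖g n‖) := by ring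
            _ ≤ ‖P 0‖ * C2 := mul_le_mul_of_nonneg_left (hC2 n) (norm_nonneg _)
            _ ≤ KF := le_max_left _ _
            _ = KF * (ww (0+1))⁻¹ := by rw [hw1]; ring
        · have hnk1 : 1 ≤ n - k := by omega
          simp only [hF]
          rw [if_pos hcase, norm_smul, Real.norm_eq_abs, abs_of_nonneg (ww_nonneg n)]
          have e1 : ‖P k (g (n-k))‖ ≤ (C1 / ww k) * (C2 / ww (n-k)) :=
            le_trans ((P k).le_opNorm _)
              (mul_le_mul (hPle k hk) (hgle (n-k) hnk1) (norm_nonneg _)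
                (div_nonneg hC1nn (ww_nonneg k)))
          have hwn : ww n ≤ 3 * ww (n-k) := ww_double (by omega)
          have hwk : ww (k+1) ≤ 3 * ww k := ww_double (by omega)
          have hwkpos : 0 < ww k := ww_pos hk
          have hwnkpos : 0 < ww (n-k) := ww_pos hnk1
          have hwk1pos : 0 < ww (k+1) := ww_pos (Nat.le_add_left 1 k)
          have e2 : ww n * ((C1 / ww k) * (C2 / ww (n-k)))
              ≤ 9 * (C1 * C2) * (ww (k+1))⁻¹ := by
            have e3 : ww n * ((C1 / ww k) * (C2 / ww (n-k)))
                = C1 * C2 * ww n / (ww k * ww (n-k)) := by field_simp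
            rw [e3, ← div_eq_mul_inv, div_le_div_iff₀ (mul_pos hwkpos hwnkpos) hwk1pos]
            nlinarith [mul_le_mul hwn hwk (ww_nonneg (k+1)) (by linarith : (0:ℝ) ≤ 3 * ww (n-k)),
              mul_nonneg hC1nn hC2nn, ww_nonneg n, ww_nonneg (k+1)]
          calc ww n * ‖P k (g (n-k))‖ ≤ ww n * ((C1 / ww k) * (C2 / ww (n-k))) :=
                mul_le_mul_of_nonneg_left e1 (ww_nonneg n)
            _ ≤ 9 * (C1 * C2) * (ww (k+1))⁻¹ := e2
            _ ≤ KF * (ww (k+1))⁻¹ :=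
                mul_le_mul_of_nonneg_right (le_max_right _ _) (inv_nonneg.2 (ww_nonneg _))
      · simp only [hF]
        rw [if_neg hcase, norm_zero]
        exact mul_nonneg hKFnn (inv_nonneg.2 (ww_nonneg _))
  have hGlim : Tendsto (fun n => ∑' j, G n j) atTop (𝓝 (∑' j, Plim (g j))) := by
    refine tendsto_tsum_of_dominated_convergence
      (bound := fun j => 3 * C1 * ‖g j‖) (hgnorm.mul_left (3*C1)) ?_ ?_
    · intro j
      have hp : Tendsto (fun n : ℕ => ww (n-j) • P (n-j)) atTop (𝓝 Plim) :=
        h1'.comp (tendsto_sub_atTop_nat j)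
      have hs : Tendsto (fun n : ℕ => (ww n / ww (n-j)) • (ww (n-j) • P (n-j)))
          atTop (𝓝 ((1:ℝ) • Plim)) := (ww_ratio j).smul hp
      have hev : Continuous fun T : B →L[ℝ] B => T (g j) :=
        (ContinuousLinearMap.apply ℝ B (g j)).continuous
      have hc := (hev.tendsto ((1:ℝ) • Plim)).comp hs
      rw [one_smul] at hc
      refine Tendsto.congr' ?_ hc
      filter_upwards [eventually_ge_atTop (2*j+1)] with n hn
      have h2j : 2*j < n := by omega
      have hnj : 1 ≤ n - j := by omega
      have hne : ww (n-j) ≠ 0 := ne_of_gt (ww_pos hnj)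
      simp only [hG, Function.comp]
      rw [if_pos h2j, smul_smul, div_mul_cancel₀ _ hne,
        ContinuousLinearMap.smul_apply]
    · filter_upwards [eventually_ge_atTop 1] with n hn j
      by_cases hcase : 2*j < n
      · have hnj1 : 1 ≤ n - j := by omega
        simp only [hG]
        rw [if_pos hcase, norm_smul, Real.norm_eq_abs, abs_of_nonneg (ww_nonneg n)]
        have e1 : ‖P (n-j) (g j)‖ ≤ (C1 / ww (n-j)) * ‖g j‖ :=
          le_trans ((P (n-j)).le_opNorm _)
            (mul_le_mul_of_nonneg_right (hPle (n-j) hnj1) (norm_nonneg _))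
        have hwn : ww n ≤ 3 * ww (n-j) := ww_double (by omega)
        have hwnjpos : 0 < ww (n-j) := ww_pos hnj1
        calc ww n * ‖P (n-j) (g j)‖ ≤ ww n * ((C1 / ww (n-j)) * ‖g j‖) :=
              mul_le_mul_of_nonneg_left e1 (ww_nonneg n)
          _ ≤ 3 * C1 * ‖g j‖ := by
              have e2 : ww n * (C1 / ww (n-j) * ‖g j‖) = ww n * (C1 * ‖g j‖) / ww (n-j) := by
                field_simp
              rw [e2, div_le_iff₀ hwnjpos]
              nlinarith [mul_le_mul_of_nonneg_right hwn
                (mul_nonneg hC1nn (norm_nonneg (g j)))]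
      · simp only [hG]
        rw [if_neg hcase, norm_zero]
        exact mul_nonneg (by linarith) (norm_nonneg _)
  have hcomb := hFlim.add hGlim
  have e1 : ∑' k, P k glim = (∑' k, P k) glim := by
    have := (ContinuousLinearMap.apply ℝ B glim).map_tsum hP
    simpa using this.symm
  have e2 : ∑' j, Plim (g j) = Plim (∑' j, g j) := (Plim.map_tsum hg).symm
  rw [e1, e2] at hcomb
  exact hcomb.congr (fun n => (key n).symm)
end
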